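/- Let q, p ∈ ℂ with q ≠ 0 and p² = q. Let S be the Solution II flip: the 4-index array with nonzero entries S^{11}_{11} = -q², S^{12}_{21} = q, S^{21}_{12} = -q⁻², S^{21}_{21} = -1-q⁻¹, S^{22}_{22} = q⁻¹, let P be the wedge projector (nonzero entries P^{12}_{12} = 1/2, P^{12}_{21} = -q/2, P^{21}_{12} = -q⁻¹/2, P^{21}_{21} = 1/2), and let g have nonzero entries g^{12} = p, g^{21} = p⁻¹. Then: (a) P^{ij}_{lm} + Σ_{h,k} S^{ij}_{hk} P^{hk}_{lm} = 0 for all i,j,l,m; (b) Σ_{m,n,r} S^{im}_{ln} g^{nr} S^{jk}_{mr} = g^{ij} δ^k_l for all i,j,k,l; (c) if moreover |q| = 1, then Σ_{k,l} conj(S^{ji}_{kl}) S^{lk}_{mn} = δ^i_m δ^j_n for all i,j,m,n. -/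

import Mathlib

open Finset

/-- The Solution II flip: nonzero entries `S^{11}_{11} = -q²`,
`S^{12}_{21} = q`, `S^{21}_{12} = -q⁻²`, `S^{21}_{21} = -1-q⁻¹`,
`S^{22}_{22} = q⁻¹`. -/
noncomputable def solIIS (q : ℂ) : Fin 2 → Fin 2 → Fin 2 → Fin 2 → ℂ :=
  fun i j k l =>
    if i = 0 ∧ j = 0 ∧ k = 0 ∧ l = 0 then -q ^ 2
    else if i = 0 ∧ j = 1 ∧ k = 1 ∧ l = 0 then q
    else if i = 1 ∧ j = 0 ∧ k = 0 ∧ l = 1 then -q⁻¹ ^ 2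
    else if i = 1 ∧ j = 0 ∧ k = 1 ∧ l = 0 then -1 - q⁻¹
    else if i = 1 ∧ j = 1 ∧ k = 1 ∧ l = 1 then q⁻¹
    else 0

/-- The wedge-product projector of the Wess–Zumino calculus on the real quantum
plane: nonzero entries `P^{12}_{12} = 1/2`, `P^{12}_{21} = -q/2`,
`P^{21}_{12} = -q⁻¹/2`, `P^{21}_{21} = 1/2`. -/
noncomputable def wedgeP (q : ℂ) : Fin 2 → Fin 2 → Fin 2 → Fin 2 → ℂ :=
  fun i j k l =>
    if i = 0 ∧ j = 1 ∧ k = 0 ∧ l = 1 then 1 / 2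
    else if i = 0 ∧ j = 1 ∧ k = 1 ∧ l = 0 then -q / 2
    else if i = 1 ∧ j = 0 ∧ k = 0 ∧ l = 1 then -q⁻¹ / 2
    else if i = 1 ∧ j = 0 ∧ k = 1 ∧ l = 0 then 1 / 2
    else 0

/-- The metric of Solution II: nonzero entries `g^{12} = p`, `g^{21} = p⁻¹`
with `p² = q`. -/
noncomputable def solIIg (p : ℂ) : Fin 2 → Fin 2 → ℂ :=
  fun i j =>
    if i = 0 ∧ j = 1 then p
    else if i = 1 ∧ j = 0 then p⁻¹
    else 0

/-- Conjugation commutes with the entries because they are rational functions of `q`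
with real coefficients. -/
lemma conj_solIIS (q : ℂ) (i j k l : Fin 2) :
    starRingEnd ℂ (solIIS q i j k l) = solIIS (starRingEnd ℂ q) i j k l := by
  unfold solIIS
  split_ifs <;> simp

lemma wedgeP_add_sum_solIIS_mul_wedgeP {q : ℂ} (hq : q ≠ 0) (i j l m : Fin 2) :
    wedgeP q i j l m + ∑ h : Fin 2, ∑ k : Fin 2, solIIS q i j h k * wedgeP q h k l m = 0 := by
  fin_cases i <;> fin_cases j <;> fin_cases l <;> fin_cases m <;>
    simp [solIIS, wedgeP, Fin.sum_univ_two] <;> grind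

lemma sum_solIIS_mul_solIIg_mul_solIIS (p : ℂ) (i j k l : Fin 2) :
    ∑ m : Fin 2, ∑ n : Fin 2, ∑ r : Fin 2,
        solIIS (p ^ 2) i m l n * solIIg p n r * solIIS (p ^ 2) j k m r
      = solIIg p i j * (if k = l then 1 else 0) := by
  rcases eq_or_ne p 0 with rfl | hp
  · simp [solIIg]
  fin_cases i <;> fin_cases j <;> fin_cases k <;> fin_cases l <;>
    simp [solIIS, solIIg, Fin.sum_univ_two] <;> grind

lemma sum_solIIS_inv_mul_solIIS {q : ℂ} (hq : q ≠ 0) (i j m n : Fin 2) :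
    ∑ k : Fin 2, ∑ l : Fin 2, solIIS q⁻¹ j i k l * solIIS q l k m n
      = (if i = m then 1 else 0) * (if j = n then 1 else 0) := by
  fin_cases i <;> fin_cases j <;> fin_cases m <;> fin_cases n <;>
    simp [solIIS, Fin.sum_univ_two] <;> grind

/-- Solution II: (a) the consistency condition `π∘(σ+1) = 0`, (b) metric
compatibility, and (c) (for `|q| = 1`) the flip reality condition all hold. -/
theorem solII (q p : ℂ) (hq : q ≠ 0) (hp : p ^ 2 = q) :
    (∀ i j l m : Fin 2,
        wedgeP q i j l m
          + ∑ h : Fin 2, ∑ k : Fin 2, solIIS q i j h k * wedgeP q h k l m = 0)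
    ∧ (∀ i j k l : Fin 2,
        (∑ m : Fin 2, ∑ n : Fin 2, ∑ r : Fin 2,
            solIIS q i m l n * solIIg p n r * solIIS q j k m r)
          = solIIg p i j * (if k = l then 1 else 0))
    ∧ (‖q‖ = 1 →
        ∀ i j m n : Fin 2,
          (∑ k : Fin 2, ∑ l : Fin 2,
              (starRingEnd ℂ) (solIIS q j i k l) * solIIS q l k m n)
            = (if i = m then 1 else 0) * (if j = n then 1 else 0)) := by
  refine ⟨wedgeP_add_sum_solIIS_mul_wedgeP hq, ?_, fun hq1 i j m n => ?_⟩
  · subst hp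
    exact sum_solIIS_mul_solIIg_mul_solIIS p
  · simp only [conj_solIIS, ← Complex.inv_eq_conj hq1]
    exact sum_solIIS_inv_mul_solIIS hq i j m n
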